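/- The graph C_5 ⊠ K_2 is 5-regular, has clique number 4 (in particular it is K_5-free), and has independence number 2. -/

import Mathlib

open SimpleGraph

/-- The fractional chromatic number, as the infimum of `a/b` over all `(a:b)`-colorings. -/
noncomputable def fracChrom {V : Type*} (G : SimpleGraph V) : ℝ :=
  sInf {r : ℝ | ∃ a b : ℕ, 0 < b ∧
    (∃ ψ : V → Finset (Fin a), (∀ v, b ≤ (ψ v).card) ∧
      ∀ u v, G.Adj u v → Disjoint (ψ u) (ψ v)) ∧ r = a / b}

/-- The square of the 8-cycle. -/
def C8sq : SimpleGraph (ZMod 8) := SimpleGraph.circulantGraph ({1, 2} : Set (ZMod 8))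

instance : DecidablePred (· ∈ ({1, 2} : Set (ZMod 8))) := fun x =>
  decidable_of_iff (x = 1 ∨ x = 2) (by simp)

instance : DecidableRel C8sq.Adj :=
  inferInstanceAs (DecidableRel (SimpleGraph.circulantGraph ({1, 2} : Set (ZMod 8))).Adj)

/-- The strong product of two simple graphs. -/
def strongProd {α β : Type*} (G : SimpleGraph α) (H : SimpleGraph β) :
    SimpleGraph (α × β) where
  Adj x y := x ≠ y ∧ (x.1 = y.1 ∨ G.Adj x.1 y.1) ∧ (x.2 = y.2 ∨ H.Adj x.2 y.2)
  symm := ⟨fun x y h => ⟨h.1.symm, h.2.1.imp Eq.symm (fun a => G.adj_symm a),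
    h.2.2.imp Eq.symm (fun a => H.adj_symm a)⟩⟩
  loopless := ⟨fun x h => h.1 rfl⟩

instance {α β : Type*} [DecidableEq α] [DecidableEq β] (G : SimpleGraph α) (H : SimpleGraph β)
    [DecidableRel G.Adj] [DecidableRel H.Adj] : DecidableRel (strongProd G H).Adj :=
  fun x y => inferInstanceAs
    (Decidable (x ≠ y ∧ (x.1 = y.1 ∨ G.Adj x.1 y.1) ∧ (x.2 = y.2 ∨ H.Adj x.2 y.2)))

/-- The strong product `C₅ ⊠ K₂`. -/
def C5K2 : SimpleGraph (Fin 5 × Fin 2) :=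
  strongProd (SimpleGraph.cycleGraph 5) (⊤ : SimpleGraph (Fin 2))

/-- The independence number of a graph. -/
noncomputable def indepNum {V : Type*} (G : SimpleGraph V) : ℕ :=
  sSup {n | ∃ s : Finset V, s.card = n ∧ ∀ u ∈ s, ∀ v ∈ s, ¬G.Adj u v}


instance : DecidableRel C5K2.Adj :=
  inferInstanceAs
    (DecidableRel (strongProd (SimpleGraph.cycleGraph 5) (⊤ : SimpleGraph (Fin 2))).Adj)

/-!
A clique of `G ⊠ H` projects onto a clique of `G`, and each of its fibres has at most `|H|`
vertices; since `C₅` is triangle-free, cliques of `C₅ ⊠ K₂` have at most `2 · 2` vertices. In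
`G ⊠ K_m` two vertices with the same `G`-coordinate are adjacent, so an independent set projects
injectively onto an independent set of `G`, whence `α(C₅ ⊠ K₂) = α(C₅) = 2`. Closed neighbourhoods
multiply in a strong product, so degrees `d` and `e` give degree `(d + 1)(e + 1) - 1 = 5`.
-/

open Finset

theorem indepNum_eq_simpleGraph_indepNum {V : Type*} (G : SimpleGraph V) :
    _root_.indepNum G = G.indepNum := by
  unfold _root_.indepNum SimpleGraph.indepNum
  congr 1
  ext n
  refine exists_congr fun s => ?_
  simp only [isNIndepSet_iff, isIndepSet_iff, Set.Pairwise, mem_coe]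
  constructor
  · exact fun ⟨hcard, hs⟩ => ⟨fun u hu v hv _ => hs u hu v hv, hcard⟩
  · rintro ⟨hs, hcard⟩
    refine ⟨hcard, fun u hu v hv => ?_⟩
    rcases eq_or_ne u v with rfl | huv
    · exact G.irrefl
    · exact hs hu hv huv

namespace SimpleGraph

variable {α β : Type*} {G : SimpleGraph α} {H : SimpleGraph β}

theorem IsClique.card_lt_of_cliqueFree {n : ℕ} {s : Finset α} (hG : G.CliqueFree n)
    (hs : G.IsClique (s : Set α)) : #s < n := by
  by_contra! h
  obtain ⟨t, hts, ht⟩ := exists_subset_card_eq h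
  exact hG t ⟨hs.subset hts, ht⟩

theorem cliqueNum_lt_of_cliqueFree {n : ℕ} (hG : G.CliqueFree n) : G.cliqueNum < n := by
  obtain ⟨s, hs⟩ := G.exists_isNClique_cliqueNum
  exact hs.card_eq ▸ hs.isClique.card_lt_of_cliqueFree hG

theorem strongProd_adj {x y : α × β} :
    (strongProd G H).Adj x y ↔
      x ≠ y ∧ (x.1 = y.1 ∨ G.Adj x.1 y.1) ∧ (x.2 = y.2 ∨ H.Adj x.2 y.2) :=
  Iff.rfl

theorem strongProd_top_adj {x y : α × β} :
    (strongProd G ⊤).Adj x y ↔ x ≠ y ∧ (x.1 = y.1 ∨ G.Adj x.1 y.1) := by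
  simp only [strongProd_adj, top_adj]
  tauto

section Degree

variable [Fintype α] [Fintype β] [DecidableEq α] [DecidableEq β]
  [DecidableRel G.Adj] [DecidableRel H.Adj]

theorem neighborFinset_strongProd (x : α × β) :
    (strongProd G H).neighborFinset x =
      (insert x.1 (G.neighborFinset x.1) ×ˢ insert x.2 (H.neighborFinset x.2)).erase x := by
  ext y
  simp only [mem_neighborFinset, strongProd_adj, mem_erase, mem_product, mem_insert, ne_comm,
    eq_comm]

theorem degree_strongProd (x : α × β) :
    (strongProd G H).degree x = (G.degree x.1 + 1) * (H.degree x.2 + 1) - 1 := by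
  rw [← card_neighborFinset_eq_degree, neighborFinset_strongProd, card_erase_of_mem,
    card_product, card_insert_of_notMem (G.notMem_neighborFinset_self _),
    card_insert_of_notMem (H.notMem_neighborFinset_self _), card_neighborFinset_eq_degree,
    card_neighborFinset_eq_degree]
  simp

theorem IsRegularOfDegree.strongProd {d e : ℕ} (hG : G.IsRegularOfDegree d)
    (hH : H.IsRegularOfDegree e) : (strongProd G H).IsRegularOfDegree ((d + 1) * (e + 1) - 1) :=
  fun x => by rw [degree_strongProd, hG.degree_eq, hH.degree_eq]

end Degree

theorem IsClique.image_fst_of_strongProd [DecidableEq α] {s : Finset (α × β)}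
    (hs : (strongProd G H).IsClique (s : Set (α × β))) :
    G.IsClique (s.image Prod.fst : Set α) := by
  simp only [coe_image]
  rintro _ ⟨x, hx, rfl⟩ _ ⟨y, hy, rfl⟩ hxy
  exact (hs hx hy fun h => hxy (congrArg Prod.fst h)).2.1.resolve_left hxy

theorem CliqueFree.strongProd [Fintype β] {n : ℕ} (hG : G.CliqueFree (n + 1)) :
    (strongProd G H).CliqueFree (n * Fintype.card β + 1) := by
  classical
  intro s hs
  have hfst : #(s.image Prod.fst) ≤ n :=
    Nat.lt_succ_iff.mp (hs.isClique.image_fst_of_strongProd.card_lt_of_cliqueFree hG)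
  have hcard : n * Fintype.card β + 1 ≤ n * Fintype.card β :=
    calc n * Fintype.card β + 1 = #s := hs.card_eq.symm
      _ ≤ #(s.image Prod.fst ×ˢ s.image Prod.snd) := card_le_card subset_product
      _ = #(s.image Prod.fst) * #(s.image Prod.snd) := card_product _ _
      _ ≤ n * Fintype.card β := Nat.mul_le_mul hfst (card_le_univ _)
  omega

theorem IsIndepSet.fst_ne_and_not_adj_of_strongProd_top {s : Set (α × β)}
    (hs : (strongProd G ⊤).IsIndepSet s) ⦃x y : α × β⦄ (hx : x ∈ s) (hy : y ∈ s)
    (hxy : x ≠ y) : x.1 ≠ y.1 ∧ ¬G.Adj x.1 y.1 := by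
  have hnadj : ¬(strongProd G ⊤).Adj x y := hs hx hy hxy
  rw [strongProd_top_adj] at hnadj
  tauto

theorem indepNum_strongProd_top [Finite α] [Finite β] [Nonempty β] :
    (strongProd G (⊤ : SimpleGraph β)).indepNum = G.indepNum := by
  classical
  apply le_antisymm
  · obtain ⟨t, ht⟩ := (strongProd G (⊤ : SimpleGraph β)).exists_isNIndepSet_indepNum
    have hfst := ht.isIndepSet.fst_ne_and_not_adj_of_strongProd_top
    have hinj : Set.InjOn Prod.fst (t : Set (α × β)) := fun x hx y hy h =>
      by_contra fun hxy => (hfst hx hy hxy).1 h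
    rw [← ht.card_eq, ← card_image_of_injOn hinj]
    apply IsIndepSet.card_le_indepNum
    simp only [coe_image]
    rintro _ ⟨x, hx, rfl⟩ _ ⟨y, hy, rfl⟩ hxy
    exact (hfst hx hy fun h => hxy (congrArg Prod.fst h)).2
  · obtain ⟨s, hs⟩ := G.exists_isNIndepSet_indepNum
    obtain ⟨b⟩ := ‹Nonempty β›
    let f : α ↪ α × β := ⟨fun a => (a, b), fun _ _ h => congrArg Prod.fst h⟩
    rw [← hs.card_eq, ← card_map f]
    apply IsIndepSet.card_le_indepNum
    simp only [coe_map]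
    rintro _ ⟨x, hx, rfl⟩ _ ⟨y, hy, rfl⟩ hxy
    rw [strongProd_top_adj]
    exact fun ⟨_, h⟩ =>
      h.elim (fun h => hxy (congrArg f h)) (hs.isIndepSet hx hy fun h => hxy (congrArg f h))

theorem cycleGraph_five_isRegularOfDegree_two : (cycleGraph 5).IsRegularOfDegree 2 :=
  fun _ => cycleGraph_degree_three_le

theorem cycleGraph_five_cliqueFree_three : (cycleGraph 5).CliqueFree 3 := by
  unfold CliqueFree
  decide

theorem cycleGraph_five_indepNum : (cycleGraph 5).indepNum = 2 := by
  apply le_antisymm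
  · have hsmall : ∀ s : Finset (Fin 5), (cycleGraph 5).IsIndepSet (s : Set (Fin 5)) → #s ≤ 2 := by
      decide
    obtain ⟨s, hs⟩ := (cycleGraph 5).exists_isNIndepSet_indepNum
    exact hs.card_eq ▸ hsmall s hs.isIndepSet
  · exact (show (cycleGraph 5).IsIndepSet ({0, 2} : Finset (Fin 5)) by decide).card_le_indepNum

end SimpleGraph

/-- `C₅ ⊠ K₂` is 5-regular, has clique number 4 (so is `K₅`-free), and
independence number 2. -/
theorem C5K2_properties :
    C5K2.IsRegularOfDegree 5 ∧ C5K2.cliqueNum = 4 ∧ C5K2.CliqueFree 5 ∧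
      _root_.indepNum C5K2 = 2 := by
  have hregular : C5K2.IsRegularOfDegree ((2 + 1) * (1 + 1) - 1) :=
    cycleGraph_five_isRegularOfDegree_two.strongProd IsRegularOfDegree.top
  have hcliqueFree : C5K2.CliqueFree (2 * 2 + 1) := cycleGraph_five_cliqueFree_three.strongProd
  have hclique : C5K2.IsNClique 4 {(0, 0), (0, 1), (1, 0), (1, 1)} := by decide
  refine ⟨hregular, le_antisymm ?_ ?_, hcliqueFree, ?_⟩
  · exact Nat.lt_succ_iff.mp (cliqueNum_lt_of_cliqueFree hcliqueFree)
  · exact hclique.card_eq ▸ hclique.isClique.card_le_cliqueNum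
  · rw [indepNum_eq_simpleGraph_indepNum, C5K2, indepNum_strongProd_top, cycleGraph_five_indepNum]
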